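/- For each integer n \u2265 2, let T_n be the tree obtained from the star K_{1,n} (centre c with leaves l_1, ..., l_n) by adding two new leaves adjacent to each l_i. Then \u03b3(T_n) = n while \u03b3^\u221e_{all,2}(T_n) = 2. In particular, for n \u2265 3 the eternal distance-2 domination number of T_n is strictly less than its domination number, even though every vertex of the (unique) minimum dominating set {l_1, ..., l_n} has at least two private neighbours. -/

import Mathlib

/-!
Every dominating set of `T_n` meets each branch `{l_i, l_i's two leaves}`, since a leaf of
branch `i` is dominated only by itself or `l_i`; so `γ(T_n) ≥ n`, with `{l_1, …, l_n}` attaining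
it. A dominating set of size `n` meets each branch exactly once, and if it missed `l_i` it would
need both leaves of branch `i`; hence it is `{l_1, …, l_n}`.

The centre is within distance 2 of every vertex, so two guards suffice: one rests on the centre,
and after each attack the centre guard answers it while the other guard returns to the centre.
A single guard does not suffice: after an attack on a leaf of one branch it must cover the leaves
of another branch, which are at distance 4.
-/

open SimpleGraph

universe u v

namespace EternalDom

variable {V : Type u} {W : Type v}

/-- `x` is within distance `k` of `y` in `G` (in particular, a path between them exists). -/
def WithinDist (G : SimpleGraph V) (k : ℕ) (x y : V) : Prop :=
  G.Reachable x y ∧ G.dist x y ≤ k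

/-- A multiset of guards is distance-`k` dominating: every vertex is within
distance `k` of some guard. -/
def IsDistKDomMultiset (G : SimpleGraph V) (k : ℕ) (D : Multiset V) : Prop :=
  ∀ w : V, ∃ x ∈ D, WithinDist G k x w

/-- `F` is an eternal distance-`k` defence family of guard configurations of size `m`:
a nonempty family of distance-`k` dominating multisets, all of cardinality `m`, such that
for every configuration `D ∈ F` and every attacked vertex `w` there is a configuration
`D' ∈ F` containing `w` that is obtained from `D` by a matching (bijection) moving each
guard a distance of at most `k`. -/
def IsEternalFamily (G : SimpleGraph V) (k m : ℕ) (F : Set (Multiset V)) : Prop :=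
  F.Nonempty ∧
    (∀ D ∈ F, Multiset.card D = m ∧ IsDistKDomMultiset G k D) ∧
    (∀ D ∈ F, ∀ w : V, ∃ D' ∈ F, w ∈ D' ∧ Multiset.Rel (WithinDist G k) D D')

/-- The eternal distance-`k` domination number `γ^∞_{all,k}(G)`. -/
noncomputable def eternalNum (G : SimpleGraph V) (k : ℕ) : ℕ :=
  sInf {m | ∃ F : Set (Multiset V), IsEternalFamily G k m F}

/-- `x` dominates `w`: they are equal or adjacent. -/
def Dominates (G : SimpleGraph V) (x w : V) : Prop := w = x ∨ G.Adj x w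

/-- A dominating set of vertices. -/
def IsDomSet (G : SimpleGraph V) (D : Set V) : Prop := ∀ w : V, ∃ x ∈ D, Dominates G x w

/-- The domination number `γ(G)`. -/
noncomputable def domNum (G : SimpleGraph V) : ℕ :=
  sInf {n | ∃ D : Set V, IsDomSet G D ∧ D.ncard = n}

/-- A distance-`k` dominating set of vertices. -/
def IsDistKDomSet (G : SimpleGraph V) (k : ℕ) (D : Set V) : Prop :=
  ∀ w : V, ∃ x ∈ D, WithinDist G k x w

/-- The distance-`k` domination number `γ_k(G)`. -/
noncomputable def distDomNum (G : SimpleGraph V) (k : ℕ) : ℕ :=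
  sInf {n | ∃ D : Set V, IsDistKDomSet G k D ∧ D.ncard = n}

/-- A leaf: a vertex of degree 1, i.e. with a unique neighbour. -/
def IsLeafV (G : SimpleGraph V) (x : V) : Prop := ∃! y, G.Adj x y

/-- A stem: a vertex adjacent to at least one leaf. -/
def IsStem (G : SimpleGraph V) (x : V) : Prop := ∃ y, G.Adj x y ∧ IsLeafV G y

/-- `k`-leaves: a `0`-leaf is a leaf; for `k > 0`, `v` is a `k`-leaf iff `v` is adjacent to
some `(k-1)`-leaf and all but at most one of the neighbours of `v` are `t`-leaves for some
`t < k`. -/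
def IsKLeaf (G : SimpleGraph V) : ℕ → V → Prop
  | 0, v => IsLeafV G v
  | (k + 1), v =>
      (∃ u, G.Adj v u ∧ IsKLeaf G k u) ∧
        ∃ w : V, ∀ x : V, G.Adj v x → x ≠ w → ∃ t, ∃ _ : t ≤ k, IsKLeaf G t x
  termination_by k _ => k
  decreasing_by all_goals omega

/-- For a 2-leaf `v`, the set `L(v)`: the union of `L[u]` over all neighbours `u` of `v`
which are 0-leaves or 1-leaves, where for a 1-leaf `u`, `L[u]` consists of `u` and the leaves
adjacent to `u`. -/
def Lopen (G : SimpleGraph V) (v : V) : Set V :=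
  {x | ∃ u, G.Adj v u ∧
    ((IsKLeaf G 0 u ∧ x = u) ∨
      (IsKLeaf G 1 u ∧ (x = u ∨ (G.Adj u x ∧ IsKLeaf G 0 x))))}

/-- For a 2-leaf `v`, the set `L[v] = L(v) ∪ {v}`. -/
def Lclosed (G : SimpleGraph V) (v : V) : Set V := insert v (Lopen G v)

/-- A graph is eternal distance-2 domination critical if deleting any non-cut vertex
(one whose removal leaves the graph connected) strictly decreases the eternal
distance-2 domination number. -/
def EternalCritical (G : SimpleGraph V) : Prop :=
  ∀ x : V, (G.induce {y | y ≠ x}).Connected →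
    eternalNum (G.induce {y | y ≠ x}) 2 < eternalNum G 2

/-- Attach a pendant path `x₁ x₂ … xₙ` on `n` new vertices to the vertex `y`,
via the edge `y x₁`. -/
def attachPath (G : SimpleGraph V) (y : V) (n : ℕ) : SimpleGraph (V ⊕ Fin n) :=
  G.map Sum.inl ⊔ (pathGraph n).map Sum.inr ⊔
    fromEdgeSet {e | ∃ h : 0 < n, e = s(Sum.inl y, Sum.inr ⟨0, h⟩)}

/-- The star `K_{1,m}`: centre `0`, leaves the `m` nonzero elements of `Fin (m+1)`. -/
def starGraph (m : ℕ) : SimpleGraph (Fin (m + 1)) where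
  Adj x y := (x = 0 ∧ y ≠ 0) ∨ (y = 0 ∧ x ≠ 0)
  symm := ⟨fun x y => by tauto⟩
  loopless := ⟨by rintro x (⟨h1, h2⟩ | ⟨h1, h2⟩) <;> exact h2 h1⟩

/-- Disjoint union of `G` and the star `K_{1,m}` together with one edge joining the
vertex `a` of the star to the vertex `y` of `G`. -/
def attachStar (G : SimpleGraph V) (y : V) (m : ℕ) (a : Fin (m + 1)) :
    SimpleGraph (V ⊕ Fin (m + 1)) :=
  G.map Sum.inl ⊔ (starGraph m).map Sum.inr ⊔
    fromEdgeSet {s(Sum.inl y, Sum.inr a)}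

/-- From `G` and a vertex `v`: add a new star `K_{1,m}` joined by an edge from its centre
to `v`, together with `t` new leaves adjacent to `v`. -/
def addStarAndLeaves (G : SimpleGraph V) (v : V) (m t : ℕ) :
    SimpleGraph (V ⊕ (Fin (m + 1) ⊕ Fin t)) :=
  G.map Sum.inl ⊔
    (starGraph m).map (Sum.inr ∘ Sum.inl) ⊔
    fromEdgeSet ({s(Sum.inl v, Sum.inr (Sum.inl 0))} ∪
      {e | ∃ i : Fin t, e = s(Sum.inl v, Sum.inr (Sum.inr i))})

/-- From `G` and a vertex `v`: add two new stars `K_{1,m}` and `K_{1,M}`, joining the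
centre of each new star to `v` by an edge. -/
def addTwoStars (G : SimpleGraph V) (v : V) (m M : ℕ) :
    SimpleGraph (V ⊕ (Fin (m + 1) ⊕ Fin (M + 1))) :=
  G.map Sum.inl ⊔
    (starGraph m).map (Sum.inr ∘ Sum.inl) ⊔
    (starGraph M).map (Sum.inr ∘ Sum.inr) ⊔
    fromEdgeSet {s(Sum.inl v, Sum.inr (Sum.inl 0)), s(Sum.inl v, Sum.inr (Sum.inr 0))}

/-- The 1-sum of `G` and `H` at the vertex `u` of `G` and the vertex `w` of `H`:
the disjoint union of `G` and `H` with `u` and `w` identified. -/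
def oneSum (G : SimpleGraph V) (H : SimpleGraph W) (u : V) (w : W) :
    SimpleGraph (V ⊕ {x : W // x ≠ w}) where
  Adj x y :=
    match x, y with
    | Sum.inl a, Sum.inl b => G.Adj a b
    | Sum.inr a, Sum.inr b => H.Adj a.1 b.1
    | Sum.inl a, Sum.inr b => a = u ∧ H.Adj w b.1
    | Sum.inr a, Sum.inl b => b = u ∧ H.Adj w a.1
  symm := ⟨by
    rintro (a | a) (b | b) h
    · exact h.symm
    · exact h
    · exact h
    · exact h.symm⟩
  loopless := ⟨by
    rintro (a | a) h
    · exact G.loopless.irrefl a h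
    · exact H.loopless.irrefl a.1 h⟩


/-- The tree `T_n`: a star `K_{1,n}` with two extra leaves added to each leaf of the star. -/
def spider (n : ℕ) : SimpleGraph (Unit ⊕ (Fin n ⊕ Fin n × Fin 2)) :=
  fromEdgeSet ({e | ∃ i : Fin n, e = s(Sum.inl (), Sum.inr (Sum.inl i))} ∪
    {e | ∃ (i : Fin n) (j : Fin 2), e = s(Sum.inr (Sum.inl i), Sum.inr (Sum.inr (i, j)))})

/-- The set `{l_1, …, l_n}` of middle vertices of `T_n`. -/
def spiderMid (n : ℕ) : Set (Unit ⊕ (Fin n ⊕ Fin n × Fin 2)) :=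
  {x | ∃ i : Fin n, x = Sum.inr (Sum.inl i)}

/-- `w` is a private neighbour of `x` with respect to `D`: `w` is dominated by `x` and by
no other member of `D`. -/
def IsPrivateNbr (G : SimpleGraph V) (D : Set V) (x w : V) : Prop :=
  Dominates G x w ∧ ∀ d ∈ D, d ≠ x → ¬ Dominates G d w

section General

variable {G : SimpleGraph V} {k : ℕ}

theorem WithinDist.symm {x y : V} (h : WithinDist G k x y) : WithinDist G k y x :=
  ⟨h.1.symm, G.dist_comm ▸ h.2⟩

theorem _root_.SimpleGraph.Walk.abs_sub_le_length (f : V → ℤ)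
    (hf : ∀ a b, G.Adj a b → |f a - f b| ≤ 1) {x y : V} (p : G.Walk x y) : |f x - f y| ≤ p.length := by
  induction p with
  | nil => simp
  | @cons a b c hab p ih =>
    have := abs_sub_le (f a) (f b) (f c)
    have := hf a b hab
    push_cast [Walk.length_cons]
    linarith

theorem WithinDist.abs_sub_le (f : V → ℤ) (hf : ∀ a b, G.Adj a b → |f a - f b| ≤ 1) {x y : V}
    (h : WithinDist G k x y) : |f x - f y| ≤ k := by
  obtain ⟨p, hp⟩ := h.1.exists_walk_length_eq_dist
  have := p.abs_sub_le_length f hf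
  have := h.2
  omega

theorem isEternalFamily_centre_pair {c : V} (hc : ∀ w, WithinDist G k c w) :
    IsEternalFamily G k 2 {D | ∃ x, D = {c, x}} := by
  refine ⟨⟨{c, c}, c, rfl⟩, ?_, ?_⟩
  · rintro D ⟨x, rfl⟩
    exact ⟨by simp, fun w => ⟨c, by simp, hc w⟩⟩
  · rintro D ⟨x, rfl⟩ w
    refine ⟨{c, w}, ⟨w, rfl⟩, by simp, ?_⟩
    rw [Multiset.pair_comm c w]
    exact Multiset.Rel.cons (hc w) (Multiset.Rel.cons (hc x).symm Multiset.Rel.zero)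

theorem IsEternalFamily.two_le {m : ℕ} {F : Set (Multiset V)} (hF : IsEternalFamily G k m F)
    {x y : V} (hxy : ¬ WithinDist G k x y) : 2 ≤ m := by
  obtain ⟨⟨D, hD⟩, hdom, hdef⟩ := hF
  obtain ⟨D', hD', hxD', -⟩ := hdef D hD x
  obtain ⟨hcard, hcover⟩ := hdom D' hD'
  by_contra! hm
  interval_cases m
  · simp [Multiset.card_eq_zero.mp hcard] at hxD'
  · obtain ⟨a, rfl⟩ := Multiset.card_eq_one.mp hcard
    obtain rfl : x = a := Multiset.mem_singleton.mp hxD'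
    obtain ⟨b, hb, hby⟩ := hcover y
    obtain rfl : b = x := Multiset.mem_singleton.mp hb
    exact hxy hby

theorem eternalNum_eq_two {c x y : V} (hc : ∀ w, WithinDist G k c w)
    (hxy : ¬ WithinDist G k x y) : eternalNum G k = 2 := by
  have hmem : 2 ∈ {m | ∃ F : Set (Multiset V), IsEternalFamily G k m F} :=
    ⟨_, isEternalFamily_centre_pair hc⟩
  refine le_antisymm (Nat.sInf_le hmem) (le_csInf ⟨2, hmem⟩ ?_)
  rintro m ⟨F, hF⟩
  exact hF.two_le hxy

end General

section Spider

variable {n : ℕ}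

abbrev centre (n : ℕ) : Unit ⊕ (Fin n ⊕ Fin n × Fin 2) := Sum.inl ()

abbrev mid (i : Fin n) : Unit ⊕ (Fin n ⊕ Fin n × Fin 2) := Sum.inr (Sum.inl i)

abbrev leaf (i : Fin n) (j : Fin 2) : Unit ⊕ (Fin n ⊕ Fin n × Fin 2) := Sum.inr (Sum.inr (i, j))

theorem spider_adj {x y : Unit ⊕ (Fin n ⊕ Fin n × Fin 2)} :
    (spider n).Adj x y ↔
      (∃ i, x = centre n ∧ y = mid i) ∨ (∃ i, y = centre n ∧ x = mid i) ∨
      (∃ i j, x = mid i ∧ y = leaf i j) ∨ (∃ i j, y = mid i ∧ x = leaf i j) := by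
  simp only [spider, fromEdgeSet_adj, Set.mem_union, Set.mem_ofPred_eq, Sym2.eq, Sym2.rel_iff',
    Prod.mk.injEq, Prod.swap_prod_mk]
  constructor
  · rintro ⟨(⟨i, h | h⟩ | ⟨i, j, h | h⟩), -⟩ <;> simp_all
  · rintro (⟨i, rfl, rfl⟩ | ⟨i, rfl, rfl⟩ | ⟨i, j, rfl, rfl⟩ | ⟨i, j, rfl, rfl⟩) <;> simp

theorem spider_adj_centre_mid (i : Fin n) : (spider n).Adj (centre n) (mid i) :=
  spider_adj.2 (Or.inl ⟨i, rfl, rfl⟩)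

theorem spider_adj_mid_leaf (i : Fin n) (j : Fin 2) : (spider n).Adj (mid i) (leaf i j) :=
  spider_adj.2 (Or.inr (Or.inr (Or.inl ⟨i, j, rfl, rfl⟩)))

theorem spider_dominates_leaf {x : Unit ⊕ (Fin n ⊕ Fin n × Fin 2)} {i : Fin n} {j : Fin 2}
    (h : Dominates (spider n) x (leaf i j)) : x = leaf i j ∨ x = mid i := by
  rcases h with rfl | h
  · exact Or.inl rfl
  · rcases spider_adj.1 h with ⟨_, -, h'⟩ | ⟨_, h', -⟩ | ⟨i', j', rfl, h'⟩ | ⟨_, _, h', -⟩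
    · simp at h'
    · simp at h'
    · simp only [Sum.inr.injEq, Prod.mk.injEq] at h'
      exact Or.inr (by rw [h'.1])
    · simp at h'

theorem spider_withinDist_centre (w : Unit ⊕ (Fin n ⊕ Fin n × Fin 2)) :
    WithinDist (spider n) 2 (centre n) w := by
  obtain ⟨p, hp⟩ : ∃ p : (spider n).Walk (centre n) w, p.length ≤ 2 := by
    rcases w with _ | i | ⟨i, j⟩
    · exact ⟨Walk.nil, by simp⟩
    · exact ⟨(spider_adj_centre_mid i).toWalk, by simp⟩
    · exact ⟨Walk.cons (spider_adj_centre_mid i) (spider_adj_mid_leaf i j).toWalk, by simp⟩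
  exact ⟨⟨p⟩, (dist_le p).trans hp⟩

/-- The distance from `leaf i₀ 0`, except that every branch other than `i₀` is folded onto one. -/
def branchPotential (i₀ : Fin n) : Unit ⊕ (Fin n ⊕ Fin n × Fin 2) → ℤ
  | Sum.inl _ => 2
  | Sum.inr (Sum.inl i) => if i = i₀ then 1 else 3
  | Sum.inr (Sum.inr (i, _)) => if i = i₀ then 0 else 4

theorem abs_branchPotential_sub_le (i₀ : Fin n) {a b : Unit ⊕ (Fin n ⊕ Fin n × Fin 2)}
    (h : (spider n).Adj a b) : |branchPotential i₀ a - branchPotential i₀ b| ≤ 1 := by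
  rcases spider_adj.1 h with ⟨i, rfl, rfl⟩ | ⟨i, rfl, rfl⟩ | ⟨i, j, rfl, rfl⟩ | ⟨i, j, rfl, rfl⟩ <;>
    simp only [branchPotential] <;> split_ifs <;> norm_num

theorem spider_not_withinDist_leaf_leaf {i₀ i₁ : Fin n} (hne : i₀ ≠ i₁) (j₀ j₁ : Fin 2) :
    ¬ WithinDist (spider n) 2 (leaf i₀ j₀) (leaf i₁ j₁) := fun h => by
  have := h.abs_sub_le (branchPotential i₀) (fun _ _ => abs_branchPotential_sub_le i₀)
  simp [branchPotential, Ne.symm hne] at this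

theorem spider_eternalNum (hn : 2 ≤ n) : eternalNum (spider n) 2 = 2 :=
  eternalNum_eq_two spider_withinDist_centre
    (spider_not_withinDist_leaf_leaf (i₀ := ⟨0, by omega⟩) (i₁ := ⟨1, by omega⟩)
      (by simp [Fin.ext_iff]) 0 0)

theorem le_ncard_of_forall_leaf_or_mid_mem {D : Set (Unit ⊕ (Fin n ⊕ Fin n × Fin 2))}
    (h : ∀ i, ∃ x ∈ D, x = leaf i 0 ∨ x = mid i) : n ≤ D.ncard := by
  choose f hfD hf using h
  have hinj : Set.InjOn f Set.univ := by
    intro a _ b _ hab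
    rcases hf a with ha | ha <;> rcases hf b with hb | hb <;> simp_all
  simpa using Set.ncard_le_ncard_of_injOn f (fun i _ => hfD i) hinj

theorem IsDomSet.exists_mem_leaf_or_mid {D : Set (Unit ⊕ (Fin n ⊕ Fin n × Fin 2))}
    (hD : IsDomSet (spider n) D) (i : Fin n) (j : Fin 2) : ∃ x ∈ D, x = leaf i j ∨ x = mid i :=
  let ⟨x, hx, hdom⟩ := hD (leaf i j)
  ⟨x, hx, spider_dominates_leaf hdom⟩

theorem IsDomSet.spider_le_ncard {D : Set (Unit ⊕ (Fin n ⊕ Fin n × Fin 2))}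
    (hD : IsDomSet (spider n) D) : n ≤ D.ncard :=
  le_ncard_of_forall_leaf_or_mid_mem fun i => hD.exists_mem_leaf_or_mid i 0

theorem spiderMid_isDomSet (hn : 0 < n) : IsDomSet (spider n) (spiderMid n) := by
  rintro (_ | i | ⟨i, j⟩)
  · exact ⟨mid ⟨0, hn⟩, ⟨_, rfl⟩, Or.inr (spider_adj_centre_mid _).symm⟩
  · exact ⟨mid i, ⟨i, rfl⟩, Or.inl rfl⟩
  · exact ⟨mid i, ⟨i, rfl⟩, Or.inr (spider_adj_mid_leaf i j)⟩

theorem ncard_spiderMid : (spiderMid n).ncard = n := by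
  have : spiderMid n = Set.range (mid (n := n)) := by
    ext x
    simp [spiderMid, eq_comm]
  rw [this, ← Set.image_univ, Set.ncard_image_of_injective _ (fun a b h => by simpa using h)]
  simp

theorem spider_domNum (hn : 0 < n) : domNum (spider n) = n := by
  have hmem : n ∈ {m | ∃ D, IsDomSet (spider n) D ∧ D.ncard = m} :=
    ⟨spiderMid n, spiderMid_isDomSet hn, ncard_spiderMid⟩
  refine le_antisymm (Nat.sInf_le hmem) (le_csInf ⟨n, hmem⟩ ?_)
  rintro m ⟨D, hD, rfl⟩
  exact hD.spider_le_ncard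

theorem IsDomSet.mid_mem_of_ncard_eq {D : Set (Unit ⊕ (Fin n ⊕ Fin n × Fin 2))}
    (hD : IsDomSet (spider n) D) (hcard : D.ncard = n) (i : Fin n) : mid i ∈ D := by
  by_contra hi
  have hleaf : leaf i 1 ∈ D := by
    obtain ⟨x, hx, rfl | rfl⟩ := hD.exists_mem_leaf_or_mid i 1
    · exact hx
    · exact absurd hx hi
  have hle : n ≤ (D \ {leaf i 1}).ncard := by
    refine le_ncard_of_forall_leaf_or_mid_mem fun i' => ?_
    obtain ⟨x, hx, hx'⟩ := hD.exists_mem_leaf_or_mid i' 0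
    refine ⟨x, ⟨hx, ?_⟩, hx'⟩
    rintro rfl
    rcases hx' with h | h <;> simp [Prod.ext_iff] at h
  have := Set.ncard_sdiff_singleton_add_one hleaf
  omega

theorem IsDomSet.eq_spiderMid_of_ncard_eq {D : Set (Unit ⊕ (Fin n ⊕ Fin n × Fin 2))}
    (hD : IsDomSet (spider n) D) (hcard : D.ncard = n) : D = spiderMid n := by
  refine (Set.eq_of_subset_of_ncard_le ?_ (by rw [hcard, ncard_spiderMid])).symm
  rintro _ ⟨i, rfl⟩
  exact hD.mid_mem_of_ncard_eq hcard i

theorem spiderMid_isPrivateNbr_leaf (i : Fin n) (j : Fin 2) :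
    IsPrivateNbr (spider n) (spiderMid n) (mid i) (leaf i j) := by
  refine ⟨Or.inr (spider_adj_mid_leaf i j), ?_⟩
  rintro _ ⟨i', rfl⟩ hne hdom
  rcases spider_dominates_leaf hdom with h | h
  · simp at h
  · exact hne h

end Spider

/-- for `T_n` (`n ≥ 2`), `γ(T_n) = n` and `γ^∞_{all,2}(T_n) = 2`; for `n ≥ 3`
the eternal distance-2 domination number is strictly smaller than the domination number,
although `{l_1, …, l_n}` is the unique minimum dominating set and each of its vertices has
at least two private neighbours. -/
theorem spider_example (n : ℕ) (hn : 2 ≤ n) :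
    domNum (spider n) = n ∧
    eternalNum (spider n) 2 = 2 ∧
    (3 ≤ n → eternalNum (spider n) 2 < domNum (spider n)) ∧
    IsDomSet (spider n) (spiderMid n) ∧ (spiderMid n).ncard = n ∧
    (∀ D : Set (Unit ⊕ (Fin n ⊕ Fin n × Fin 2)),
      IsDomSet (spider n) D → D.ncard = domNum (spider n) → D = spiderMid n) ∧
    (∀ i : Fin n, ∃ w₁ w₂, w₁ ≠ w₂ ∧
      IsPrivateNbr (spider n) (spiderMid n) (Sum.inr (Sum.inl i)) w₁ ∧
      IsPrivateNbr (spider n) (spiderMid n) (Sum.inr (Sum.inl i)) w₂) := by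
  have hdom := spider_domNum (by omega : 0 < n)
  have het := spider_eternalNum hn
  refine ⟨hdom, het, fun _ => by omega, spiderMid_isDomSet (by omega), ncard_spiderMid,
    fun D hD hcard => hD.eq_spiderMid_of_ncard_eq (hcard.trans hdom), fun i => ?_⟩
  exact ⟨leaf i 0, leaf i 1, by simp, spiderMid_isPrivateNbr_leaf i 0,
    spiderMid_isPrivateNbr_leaf i 1⟩

end EternalDom
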